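/- Let S be a minimal separator of G that is an almost-clique (S \ {v} is a clique for some v ∈ S). Then S is safe for treewidth: G has a tree-decomposition of width tw(G) that induces S as an intersection of adjacent bags. -/

import Mathlib

open SimpleGraph

/-- A tree-decomposition of `G`: a tree `T` with bags satisfying the
vertex-cover, edge-cover and connectivity (running intersection) conditions. -/
def IsTreeDecomp {V ι : Type} (G : SimpleGraph V) (T : SimpleGraph ι) (bag : ι → Set V) : Prop :=
  T.Connected ∧ T.IsAcyclic ∧
  (∀ v : V, ∃ i, v ∈ bag i) ∧
  (∀ u v : V, G.Adj u v → ∃ i, u ∈ bag i ∧ v ∈ bag i) ∧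
  (∀ v : V, (T.induce {i | v ∈ bag i}).Connected)

/-- Treewidth: the least `k` such that `G` has a tree-decomposition all of whose
bags have at most `k + 1` vertices. -/
noncomputable def tw {V : Type} (G : SimpleGraph V) : ℕ :=
  sInf {k | ∃ (ι : Type) (T : SimpleGraph ι) (bag : ι → Set V),
    IsTreeDecomp G T bag ∧ ∀ i, (bag i).ncard ≤ k + 1}

/-- `S` separates `u` from `v` in `G`: both are outside `S` and every walk meets `S`. -/
def Separates {V : Type} (G : SimpleGraph V) (S : Set V) (u v : V) : Prop :=
  u ∉ S ∧ v ∉ S ∧ ∀ p : G.Walk u v, ∃ x ∈ p.support, x ∈ S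

/-- A minimal separator: a minimal `a`–`b` separator for some `a`, `b`. -/
def IsMinSeparator {V : Type} (G : SimpleGraph V) (S : Set V) : Prop :=
  ∃ a b, Separates G S a b ∧ ∀ S' ⊂ S, ¬ Separates G S' a b

/-- Contraction of `G` by (the edge set of) `F`: vertices are the connected
components of `F`; two distinct components are adjacent iff some vertex of one is
`G`-adjacent to some vertex of the other. -/
def contractBy {V : Type} (G F : SimpleGraph V) : SimpleGraph F.ConnectedComponent where
  Adj C D := C ≠ D ∧ ∃ u v : V,
    F.connectedComponentMk u = C ∧ F.connectedComponentMk v = D ∧ G.Adj u v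
  symm := by constructor; rintro C D ⟨h, u, v, hu, hv, huv⟩; exact ⟨h.symm, v, u, hv, hu, huv.symm⟩
  loopless := by constructor; rintro C ⟨h, -⟩; exact h rfl

/-- `G` with the extra edge `{u, v}` added. -/
def addEdge {V : Type} (G : SimpleGraph V) (u v : V) : SimpleGraph V :=
  G ⊔ fromEdgeSet {s(u, v)}

/-- `H` is a minor of `G`: disjoint nonempty connected branch sets in `G`,
one for each vertex of `H`, with edges of `H` realized between branch sets. -/
def IsMinorOf {W V : Type} (H : SimpleGraph W) (G : SimpleGraph V) : Prop :=
  ∃ B : W → Set V,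
    (∀ w, (B w).Nonempty) ∧
    (∀ w, (G.induce (B w)).Connected) ∧
    (∀ w₁ w₂, w₁ ≠ w₂ → Disjoint (B w₁) (B w₂)) ∧
    (∀ w₁ w₂, H.Adj w₁ w₂ → ∃ u ∈ B w₁, ∃ v ∈ B w₂, G.Adj u v)

/-- Chordality: every cycle of length at least 4 has a chord. -/
def IsChordal {V : Type} (H : SimpleGraph V) : Prop :=
  ∀ ⦃v : V⦄ (c : H.Walk v v), c.IsCycle → 4 ≤ c.length →
    ∃ x y, x ∈ c.support ∧ y ∈ c.support ∧ H.Adj x y ∧ s(x, y) ∉ c.edges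

/-- `H` is a minimal triangulation of `G`. -/
def IsMinimalTriangulation {V : Type} (G H : SimpleGraph V) : Prop :=
  IsChordal H ∧ G ≤ H ∧ ∀ H' : SimpleGraph V, IsChordal H' → G ≤ H' → H' ≤ H → H' = H

/-- `X` is a maximal clique of `H`. -/
def IsMaximalClique {V : Type} (H : SimpleGraph V) (X : Set V) : Prop :=
  H.IsClique X ∧ ∀ Y, H.IsClique Y → X ⊆ Y → X = Y

/-- `X` is a potential maximal clique of `G`. -/
def IsPMC {V : Type} (G : SimpleGraph V) (X : Set V) : Prop :=
  ∃ H, IsMinimalTriangulation G H ∧ IsMaximalClique H X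

/-- The vertex set of the component `C` of `G \ S`. -/
def compSet {V : Type} (G : SimpleGraph V) (S : Set V)
    (C : (G.induce Sᶜ).ConnectedComponent) : Set V :=
  {v : V | ∃ h : v ∈ Sᶜ, (G.induce Sᶜ).connectedComponentMk ⟨v, h⟩ = C}

/-- The open neighborhood of a vertex set `W` in `G`. -/
def nbhdSet {V : Type} (G : SimpleGraph V) (W : Set V) : Set V :=
  {v | v ∉ W ∧ ∃ u ∈ W, G.Adj u v}

/-- The induced subgraph on `U` with `S` completed into a clique. -/
def completedOn {V : Type} (G : SimpleGraph V) (U S : Set V) : SimpleGraph U where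
  Adj a b := a ≠ b ∧ (G.Adj (a : V) (b : V) ∨ ((a : V) ∈ S ∧ (b : V) ∈ S))
  symm := by
    constructor
    rintro a b ⟨h1, h2⟩
    refine ⟨h1.symm, ?_⟩
    rcases h2 with h | h
    · exact Or.inl h.symm
    · exact Or.inr ⟨h.2, h.1⟩
  loopless := by constructor; rintro a ⟨h, -⟩; exact h rfl

/-- The graph on `U` obtained from `G[U]` by adding the edges of the complete graph
`K(N(C))` for every component `C` of `G \ U`. -/
def realized {V : Type} (G : SimpleGraph V) (U : Set V) : SimpleGraph U where
  Adj a b := a ≠ b ∧ (G.Adj (a : V) (b : V) ∨ ∃ C : (G.induce Uᶜ).ConnectedComponent,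
    (a : V) ∈ nbhdSet G (compSet G U C) ∧ (b : V) ∈ nbhdSet G (compSet G U C))
  symm := by
    constructor
    rintro a b ⟨h1, h2⟩
    refine ⟨h1.symm, ?_⟩
    rcases h2 with h | ⟨C, hx, hy⟩
    · exact Or.inl h.symm
    · exact Or.inr ⟨C, hy, hx⟩
  loopless := by constructor; rintro a ⟨h, -⟩; exact h rfl

/-!
Let `S` be a minimal `a`–`b` separator. The components `C ∋ a` and `D ∋ b` of `G - S` are full:
every vertex of `S` has a neighbour in both. Contracting `D ∪ {v}` onto the apex `v` of the
almost-clique shows that `G[C ∪ S]` with `S` completed to a clique is a minor of `G`; contracting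
`C ∪ {v}` does the same for `G - C`. A tree decomposition of `G` of width `tw G` induces one of each
minor on the same tree, and by the Helly property of subtrees the clique `S` lies in a single bag.
Joining these two bags by an edge decomposes `G`, since the two sides meet exactly in `S`.
-/

namespace SimpleGraph

variable {V W ι : Type} {G : SimpleGraph V}

lemma Connected.induce_image {H : SimpleGraph W} (f : G →g H) {s : Set V}
    (h : (G.induce s).Connected) : (H.induce (f '' s)).Connected :=
  Connected.map (G := G.induce s) (H := H.induce (f '' s))
    ⟨fun x => ⟨f x, x, x.2, rfl⟩, fun hxy => f.map_adj hxy⟩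
    (by rintro ⟨_, x, hx, rfl⟩; exact ⟨⟨x, hx⟩, rfl⟩) h

lemma Reachable.exists_isPath_support_subset_of_induce {s : Set V} {x y : s}
    (h : (G.induce s).Reachable x y) :
    ∃ p : G.Walk x y, p.IsPath ∧ ∀ z ∈ p.support, z ∈ s := by
  classical
  obtain ⟨p, hp⟩ := h.exists_isPath
  let e := Embedding.induce (G := G) s
  refine ⟨p.map e.toHom, hp.map e.injective, fun z hz => ?_⟩
  obtain ⟨z', -, rfl⟩ := List.mem_map.mp (Walk.support_map _ p ▸ hz)
  exact z'.2

section iUnion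

variable {T : SimpleGraph ι} {A : V → Set ι} (hA : ∀ x, (T.induce (A x)).Connected)
  (hAdj : ∀ x y, G.Adj x y → (A x ∩ A y).Nonempty)
include hA hAdj

lemma Walk.reachable_induce_iUnion {x y : V} (p : G.Walk x y) {i j : ι} (hi : i ∈ A x)
    (hj : j ∈ A y) :
    (T.induce (⋃ z, A z)).Reachable ⟨i, Set.mem_iUnion_of_mem x hi⟩
      ⟨j, Set.mem_iUnion_of_mem y hj⟩ := by
  induction p generalizing i with
  | nil =>
    exact ((hA _).preconnected ⟨i, hi⟩ ⟨j, hj⟩).map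
      (induceHomOfLE _ (Set.subset_iUnion A _)).toHom
  | @cons x y z h p ih =>
    obtain ⟨k, hkx, hky⟩ := hAdj x y h
    exact (((hA x).preconnected ⟨i, hi⟩ ⟨k, hkx⟩).map
      (induceHomOfLE _ (Set.subset_iUnion A x)).toHom).trans (ih hky hj)

lemma Connected.induce_iUnion (hG : G.Connected) : (T.induce (⋃ x, A x)).Connected := by
  obtain ⟨x₀⟩ := hG.nonempty
  obtain ⟨⟨i₀, hi₀⟩⟩ := (hA x₀).nonempty
  refine (connected_iff _).mpr ⟨?_, ⟨⟨i₀, Set.mem_iUnion_of_mem x₀ hi₀⟩⟩⟩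
  rintro ⟨i, hi⟩ ⟨j, hj⟩
  obtain ⟨x, hix⟩ := Set.mem_iUnion.mp hi
  obtain ⟨y, hjy⟩ := Set.mem_iUnion.mp hj
  exact (hG.preconnected x y).some.reachable_induce_iUnion hA hAdj hix hjy

end iUnion

lemma IsAcyclic.not_isCycle_sum_inl {H : SimpleGraph W} (hG : G.IsAcyclic) {v : V}
    (c : (G ⊕g H).Walk (.inl v) (.inl v)) : ¬ c.IsCycle := by
  classical
  intro hc
  have hs : ∀ x ∈ c.support, x ∈ Set.range (Embedding.sumInl (G := G) (H := H)) := by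
    rintro (x | w) hx
    · exact ⟨x, rfl⟩
    · exact (not_reachable_sum_inl_inr (G := G) (H := H) v w ⟨c.takeUntil _ hx⟩).elim
  let e := Embedding.induce (G := G ⊕g H) (Set.range (Embedding.sumInl (G := G) (H := H)))
  have hc' : (c.induce _ hs).IsCycle := by
    refine (Walk.isCycle_map_iff_of_injective (f := e.toHom) e.injective).mp ?_
    rwa [Walk.map_induce]
  exact (Embedding.sumInl (G := G) (H := H)).isoInduceRange.isAcyclic_iff.mp hG _ hc'

lemma IsAcyclic.sum {H : SimpleGraph W} (hG : G.IsAcyclic) (hH : H.IsAcyclic) :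
    (G ⊕g H).IsAcyclic := by
  rintro (v | w) c hc
  · exact hG.not_isCycle_sum_inl c hc
  · exact hH.not_isCycle_sum_inl (c.map Iso.sumComm.toHom) (hc.map Iso.sumComm.injective)

variable {T : SimpleGraph ι}

lemma IsAcyclic.mem_support_of_adj_of_adj (hT : T.IsAcyclic) {t u u' : ι} (hu : T.Adj t u)
    (hu' : T.Adj t u') (hne : u ≠ u') (p : T.Walk u u') : t ∈ p.support := by
  classical
  by_contra ht
  refine ht (p.support_bypass_subset_support ?_)
  exact hT.mem_support_of_ne_mem_support_of_adj_of_isPath p.bypass_isPath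
    (Walk.IsPath.of_adj hu.symm) hu'.symm (by simp [hne.symm, hu'.ne.symm])

lemma IsAcyclic.mem_of_adj_of_connected (hT : T.IsAcyclic) {A B : Set ι}
    (hA : (T.induce A).Connected) (hB : (T.induce B).Connected) (hAB : (A ∩ B).Nonempty)
    {t t' s : ι} (htA : t ∈ A) (htB : t ∉ B) (hsB : s ∈ B) (h : T.Adj t t') (p : T.Walk t' s)
    (hp : t ∉ p.support) : t' ∈ A := by
  obtain ⟨a, haA, haB⟩ := hAB
  obtain ⟨q, hq, hqA⟩ :=
    (hA.preconnected ⟨t, htA⟩ ⟨a, haA⟩).exists_isPath_support_subset_of_induce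
  obtain ⟨r, -, hrB⟩ :=
    (hB.preconnected ⟨a, haB⟩ ⟨s, hsB⟩).exists_isPath_support_subset_of_induce
  cases q with
  | nil => exact absurd haB htB
  | @cons _ u _ h' q =>
    rw [Walk.cons_isPath_iff] at hq
    by_contra ht'
    have hu : u ≠ t' := fun hut => ht' (hut ▸ hqA u (by simp))
    -- `q`, `r` and `p` join the two neighbours `u ≠ t'` of `t` without passing through `t`
    have ht := hT.mem_support_of_adj_of_adj h' h hu (q.append (r.append p.reverse))
    simp only [Walk.mem_support_append_iff, Walk.support_reverse, List.mem_reverse] at ht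
    exact ht.elim hq.2 (Or.elim · (fun htr => htB (hrB t htr)) hp)

end SimpleGraph

namespace IsTreeDecomp

variable {V W ι : Type} {G : SimpleGraph V} {T : SimpleGraph ι} {bag : ι → Set V}

lemma mono {H : SimpleGraph V} (hHG : H ≤ G) (hd : IsTreeDecomp G T bag) :
    IsTreeDecomp H T bag :=
  ⟨hd.1, hd.2.1, hd.2.2.1, fun u w h => hd.2.2.2.1 u w (hHG h), hd.2.2.2.2⟩

lemma exists_subset_bag (hd : IsTreeDecomp G T bag) {K : Set V} (hK : K.Finite)
    (hpair : ∀ u ∈ K, ∀ w ∈ K, ∃ i, u ∈ bag i ∧ w ∈ bag i) : ∃ i, K ⊆ bag i := by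
  obtain ⟨hconn, hacyc, -, -, hsub⟩ := hd
  induction K, hK using Set.Finite.induction_on with
  | empty => exact ⟨hconn.nonempty.some, Set.empty_subset _⟩
  | @insert x Y _ _ ih =>
    obtain ⟨t, hYt⟩ := ih fun u hu w hw => hpair u (.inr hu) w (.inr hw)
    obtain ⟨s, hxs, -⟩ := hpair x (.inl rfl) x (.inl rfl)
    obtain ⟨p, hp⟩ := hconn.preconnected.exists_isPath t s
    -- walk from `t` towards a bag of `x`; each step keeps `Y` inside the bag
    induction p with
    | nil => exact ⟨_, Set.insert_subset hxs hYt⟩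
    | @cons t t' s h p ih' =>
      by_cases hxt : x ∈ bag t
      · exact ⟨t, Set.insert_subset hxt hYt⟩
      rw [Walk.cons_isPath_iff] at hp
      refine ih' (fun y hy => ?_) hxs hp.1
      obtain ⟨k, hxk, hyk⟩ := hpair x (.inl rfl) y (.inr hy)
      exact hacyc.mem_of_adj_of_connected (hsub y) (hsub x) ⟨k, hyk, hxk⟩ (hYt hy) hxt hxs h p
        hp.2

lemma exists_subset_bag_of_isClique (hd : IsTreeDecomp G T bag) {K : Set V} (hK : K.Finite)
    (hKc : G.IsClique K) : ∃ i, K ⊆ bag i := by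
  refine hd.exists_subset_bag hK fun u hu w hw => ?_
  obtain rfl | huw := eq_or_ne u w
  · obtain ⟨i, hi⟩ := hd.2.2.1 u
    exact ⟨i, hi, hi⟩
  · exact hd.2.2.2.1 u w (hKc hu hw huw)

lemma of_isMinorOf [Finite V] {H : SimpleGraph W} (hm : IsMinorOf H G)
    (hd : IsTreeDecomp G T bag) :
    ∃ bag' : ι → Set W, IsTreeDecomp H T bag' ∧ ∀ i, (bag' i).ncard ≤ (bag i).ncard := by
  obtain ⟨B, hne, hBconn, hdisj, hedge⟩ := hm
  obtain ⟨hTconn, hTacyc, hvc, hec, hsub⟩ := hd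
  refine ⟨fun i => {w | ∃ u ∈ B w, u ∈ bag i}, ⟨hTconn, hTacyc, fun w => ?_, ?_, fun w => ?_⟩,
    fun i => ?_⟩
  · obtain ⟨u, hu⟩ := hne w
    obtain ⟨i, hi⟩ := hvc u
    exact ⟨i, u, hu, hi⟩
  · intro w₁ w₂ h
    obtain ⟨u₁, hu₁, u₂, hu₂, hadj⟩ := hedge w₁ w₂ h
    obtain ⟨i, h₁, h₂⟩ := hec u₁ u₂ hadj
    exact ⟨i, ⟨u₁, hu₁, h₁⟩, u₂, hu₂, h₂⟩
  · have hset : {i | ∃ u ∈ B w, u ∈ bag i} = ⋃ u : B w, {i | (u : V) ∈ bag i} := by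
      ext i
      simp
    change (T.induce {i | ∃ u ∈ B w, u ∈ bag i}).Connected
    rw [hset]
    exact (hBconn w).induce_iUnion (fun u => hsub u) (fun u u' h => hec u u' h)
  · -- a representative in `bag i` of each branch set meeting it; disjointness makes it injective
    have hrep : ∀ w, ∃ u, (∃ u ∈ B w, u ∈ bag i) → u ∈ B w ∧ u ∈ bag i := fun w =>
      (em _).elim (fun ⟨u, hu⟩ => ⟨u, fun _ => hu⟩) fun h => ⟨(hne w).some, fun h' => absurd h' h⟩
    choose f hf using hrep
    refine Set.ncard_le_ncard_of_injOn f (fun w hw => (hf w hw).2) ?_ (Set.toFinite _)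
    intro w₁ hw₁ w₂ hw₂ heq
    by_contra hne
    exact Set.disjoint_left.mp (hdisj w₁ w₂ hne) (hf w₁ hw₁).1 (heq ▸ (hf w₂ hw₂).1)

lemma connected_induce_setOf_mem_image_val {U : Set V} {bag : ι → Set U}
    (hd : IsTreeDecomp (G.induce U) T bag) {u : V} (hu : u ∈ U) :
    (T.induce {i | u ∈ Subtype.val '' bag i}).Connected := by
  have hset : {i | u ∈ Subtype.val '' bag i} = {i | ⟨u, hu⟩ ∈ bag i} := by
    ext i
    simp [hu]
  exact hset ▸ hd.2.2.2.2 ⟨u, hu⟩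

lemma glue {ι₁ ι₂ : Type} {U₁ U₂ : Set V} {T₁ : SimpleGraph ι₁} {T₂ : SimpleGraph ι₂}
    {bag₁ : ι₁ → Set U₁} {bag₂ : ι₂ → Set U₂}
    (h₁ : IsTreeDecomp (G.induce U₁) T₁ bag₁) (h₂ : IsTreeDecomp (G.induce U₂) T₂ bag₂)
    (hcover : ∀ u, u ∈ U₁ ∨ u ∈ U₂)
    (hedge : ∀ u w, G.Adj u w → u ∈ U₁ ∧ w ∈ U₁ ∨ u ∈ U₂ ∧ w ∈ U₂)
    {r₁ : ι₁} {r₂ : ι₂} (hr₁ : U₁ ∩ U₂ ⊆ Subtype.val '' bag₁ r₁)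
    (hr₂ : U₁ ∩ U₂ ⊆ Subtype.val '' bag₂ r₂) :
    IsTreeDecomp G ((T₁ ⊕g T₂) ⊔ edge (Sum.inl r₁) (Sum.inr r₂))
      (Sum.elim (fun i => Subtype.val '' bag₁ i) (fun j => Subtype.val '' bag₂ j)) := by
  refine ⟨h₁.1.sum_sup_edge h₂.1,
    (h₁.2.1.sum h₂.2.1).sup_edge_of_not_reachable (not_reachable_sum_inl_inr _ _), fun u => ?_,
    fun u w h => ?_, fun u => ?_⟩
  · rcases hcover u with hu | hu
    · obtain ⟨i, hi⟩ := h₁.2.2.1 ⟨u, hu⟩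
      exact ⟨.inl i, _, hi, rfl⟩
    · obtain ⟨j, hj⟩ := h₂.2.2.1 ⟨u, hu⟩
      exact ⟨.inr j, _, hj, rfl⟩
  · rcases hedge u w h with ⟨hu, hw⟩ | ⟨hu, hw⟩
    · obtain ⟨i, hui, hwi⟩ := h₁.2.2.2.1 ⟨u, hu⟩ ⟨w, hw⟩ h
      exact ⟨.inl i, ⟨_, hui, rfl⟩, _, hwi, rfl⟩
    · obtain ⟨j, huj, hwj⟩ := h₂.2.2.2.1 ⟨u, hu⟩ ⟨w, hw⟩ h
      exact ⟨.inr j, ⟨_, huj, rfl⟩, _, hwj, rfl⟩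
  · have hX : {k | u ∈ Sum.elim (fun i => Subtype.val '' bag₁ i)
          (fun j => Subtype.val '' bag₂ j) k} =
        Sum.inl '' {i | u ∈ Subtype.val '' bag₁ i} ∪
          Sum.inr '' {j | u ∈ Subtype.val '' bag₂ j} := by
      ext (i | j) <;> simp
    have hempty : ∀ {κ : Type} {U : Set V} (bag : κ → Set U), u ∉ U →
        {i | u ∈ Subtype.val '' bag i} = ∅ := fun bag hu => by
      ext i
      simp [hu]
    let f₁ : T₁ →g (T₁ ⊕g T₂) ⊔ edge (Sum.inl r₁) (Sum.inr r₂) :=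
      (Hom.ofLE le_sup_left).comp Embedding.sumInl.toHom
    let f₂ : T₂ →g (T₁ ⊕g T₂) ⊔ edge (Sum.inl r₁) (Sum.inr r₂) :=
      (Hom.ofLE le_sup_left).comp Embedding.sumInr.toHom
    rw [hX]
    by_cases hu₁ : u ∈ U₁ <;> by_cases hu₂ : u ∈ U₂
    · exact connected_induce_union
        ((h₁.connected_induce_setOf_mem_image_val hu₁).induce_image f₁).preconnected
        ((h₂.connected_induce_setOf_mem_image_val hu₂).induce_image f₂).preconnected
        ⟨r₁, hr₁ ⟨hu₁, hu₂⟩, rfl⟩ ⟨r₂, hr₂ ⟨hu₁, hu₂⟩, rfl⟩ (by simp [edge])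
    · rw [hempty bag₂ hu₂, Set.image_empty, Set.union_empty]
      exact (h₁.connected_induce_setOf_mem_image_val hu₁).induce_image f₁
    · rw [hempty bag₁ hu₁, Set.image_empty, Set.empty_union]
      exact (h₂.connected_induce_setOf_mem_image_val hu₂).induce_image f₂
    · exact ((hcover u).elim hu₁ hu₂).elim

end IsTreeDecomp

lemma exists_isTreeDecomp_ncard_le_tw {V : Type} [Finite V] (G : SimpleGraph V) :
    ∃ (ι : Type) (T : SimpleGraph ι) (bag : ι → Set V),
      IsTreeDecomp G T bag ∧ ∀ i, (bag i).ncard ≤ tw G + 1 := by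
  refine Nat.sInf_mem (s := {k | ∃ (ι : Type) (T : SimpleGraph ι) (bag : ι → Set V),
    IsTreeDecomp G T bag ∧ ∀ i, (bag i).ncard ≤ k + 1})
    ⟨Nat.card V, Unit, ⊥, fun _ => Set.univ, ⟨?_, isAcyclic_bot, ?_, ?_, ?_⟩, ?_⟩
  · exact IsTree.of_subsingleton.1
  · exact fun _ => ⟨(), trivial⟩
  · exact fun _ _ _ => ⟨(), trivial, trivial⟩
  · exact fun _ => (connected_iff _).mpr ⟨.of_subsingleton, ⟨⟨(), trivial⟩⟩⟩
  · simp [Set.ncard_univ]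

section Separators

variable {V : Type} {G : SimpleGraph V} {S : Set V}

lemma compSet_eq_image (C : (G.induce Sᶜ).ConnectedComponent) :
    compSet G S C = Subtype.val '' C.supp := by
  ext v
  simp [compSet]

lemma connected_induce_compSet (C : (G.induce Sᶜ).ConnectedComponent) :
    (G.induce (compSet G S C)).Connected :=
  compSet_eq_image C ▸ C.connected_toSimpleGraph.induce_image (Embedding.induce Sᶜ).toHom

lemma disjoint_compSet {C D : (G.induce Sᶜ).ConnectedComponent} (h : C ≠ D) :
    Disjoint (compSet G S C) (compSet G S D) :=
  Set.disjoint_left.mpr fun _ ⟨_, hC⟩ ⟨_, hD⟩ => h (hC.symm.trans hD)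

lemma mem_compSet_of_adj {C : (G.induce Sᶜ).ConnectedComponent} {u w : V}
    (hu : u ∈ compSet G S C) (hw : w ∉ S) (h : G.Adj u w) : w ∈ compSet G S C := by
  obtain ⟨hu', rfl⟩ := hu
  have h' : (G.induce Sᶜ).Adj ⟨u, hu'⟩ ⟨w, hw⟩ := h
  exact ⟨hw, (ConnectedComponent.sound h'.reachable).symm⟩

lemma adj_mem_compl_compSet_or_mem_union {C : (G.induce Sᶜ).ConnectedComponent} {u w : V}
    (h : G.Adj u w) :
    u ∈ (compSet G S C)ᶜ ∧ w ∈ (compSet G S C)ᶜ ∨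
      u ∈ compSet G S C ∪ S ∧ w ∈ compSet G S C ∪ S := by
  have hside : ∀ {x y}, G.Adj x y → x ∈ compSet G S C → y ∈ compSet G S C ∪ S := fun h hx =>
    (em _).elim .inr fun hy => .inl (mem_compSet_of_adj hx hy h)
  by_cases hu : u ∈ compSet G S C
  · exact .inr ⟨.inl hu, hside h hu⟩
  by_cases hw : w ∈ compSet G S C
  · exact .inr ⟨hside h.symm hw, .inl hw⟩
  exact .inl ⟨hu, hw⟩

lemma SimpleGraph.Walk.mem_nbhdSet_compSet {C : (G.induce Sᶜ).ConnectedComponent} {a b s : V}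
    (p : G.Walk a b) (ha : a ∈ compSet G S C) (hs : s ∈ S) (hps : s ∈ p.support)
    (hp : ∀ x ∈ p.support, x ∈ S → x = s) : s ∈ nbhdSet G (compSet G S C) := by
  induction p with
  | nil =>
    rw [Walk.support_nil, List.mem_singleton] at hps
    exact absurd (hps ▸ hs) ha.1
  | @cons a a' b h p ih =>
    by_cases ha' : a' ∈ S
    · obtain rfl := hp a' (by simp) ha'
      exact ⟨fun h' => h'.1 hs, a, ha, h⟩
    · refine ih (mem_compSet_of_adj ha ha' h) ?_ fun x hx => hp x (by simp [hx])
      rw [Walk.support_cons, List.mem_cons] at hps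
      exact hps.resolve_left fun h' => ha.1 (h' ▸ hs)

lemma IsMinSeparator.exists_full_components (h : IsMinSeparator G S) :
    ∃ C D : (G.induce Sᶜ).ConnectedComponent, C ≠ D ∧
      S ⊆ nbhdSet G (compSet G S C) ∧ S ⊆ nbhdSet G (compSet G S D) := by
  obtain ⟨a, b, ⟨ha, hb, hsep⟩, hmin⟩ := h
  have hwalk : ∀ s ∈ S, ∃ p : G.Walk a b, s ∈ p.support ∧ ∀ x ∈ p.support, x ∈ S → x = s := by
    intro s hs
    have hns := hmin (S \ {s}) (Set.sdiff_singleton_ssubset.mpr hs)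
    simp only [Separates, not_and, not_forall, not_exists] at hns
    obtain ⟨p, hp⟩ := hns (fun h => ha h.1) (fun h => hb h.1)
    have hsame : ∀ x ∈ p.support, x ∈ S → x = s := fun x hx hxS =>
      by_contra fun hxs => hp x hx ⟨hxS, hxs⟩
    obtain ⟨x, hx, hxS⟩ := hsep p
    exact ⟨p, hsame x hx hxS ▸ hx, hsame⟩
  refine ⟨(G.induce Sᶜ).connectedComponentMk ⟨a, ha⟩, (G.induce Sᶜ).connectedComponentMk ⟨b, hb⟩,
    fun hab => ?_, fun s hs => ?_, fun s hs => ?_⟩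
  · obtain ⟨p, -, hpS⟩ := (ConnectedComponent.exact hab).exists_isPath_support_subset_of_induce
    obtain ⟨x, hx, hxS⟩ := hsep p
    exact hpS x hx hxS
  · obtain ⟨p, hps, hp⟩ := hwalk s hs
    exact p.mem_nbhdSet_compSet ⟨ha, rfl⟩ hs hps hp
  · obtain ⟨p, hps, hp⟩ := hwalk s hs
    exact p.reverse.mem_nbhdSet_compSet ⟨hb, rfl⟩ hs (by simpa using hps)
      fun x hx => hp x (by simpa using hx)

/-- Branch sets: `insert v D` for the apex `v`, singletons for the other vertices of `U`. -/
lemma isMinorOf_completedOn {U D : Set V} {v : V} (hv : v ∈ S) (hac : G.IsClique (S \ {v}))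
    (hD : (G.induce D).Connected) (hDU : Disjoint D U) (hSD : S ⊆ nbhdSet G D) :
    IsMinorOf (completedOn G U S) G := by
  classical
  let B : U → Set V := fun w => if (w : V) = v then insert v D else {(w : V)}
  have hself : ∀ w, (w : V) ∈ B w := fun w => by by_cases h : (w : V) = v <;> simp [B, h]
  refine ⟨B, fun w => ⟨w, hself w⟩, fun w => ?_, fun w₁ w₂ hne => ?_, ?_⟩
  · by_cases h : (w : V) = v
    · obtain ⟨-, d, hd, hdv⟩ := hSD hv
      rw [show B w = {v} ∪ D from if_pos h]
      exact connected_induce_union .of_subsingleton hD.preconnected rfl hd hdv.symm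
    · rw [show B w = {(w : V)} from if_neg h]
      exact .of_subsingleton
  · have hne' := Subtype.val_injective.ne hne
    refine Set.disjoint_left.mpr fun x hx₁ hx₂ => ?_
    simp only [B] at hx₁ hx₂
    split_ifs at hx₁ hx₂ <;> grind [Set.disjoint_left.mp hDU, w₁.2, w₂.2]
  · rintro w₁ w₂ ⟨hne, hadj | ⟨h₁, h₂⟩⟩
    · exact ⟨w₁, hself w₁, w₂, hself w₂, hadj⟩
    by_cases hv₁ : (w₁ : V) = v
    · obtain ⟨-, d, hd, hdw⟩ := hSD h₂
      exact ⟨d, by simp [B, hv₁, hd], w₂, hself w₂, hdw⟩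
    by_cases hv₂ : (w₂ : V) = v
    · obtain ⟨-, d, hd, hdw⟩ := hSD h₁
      exact ⟨w₁, hself w₁, d, by simp [B, hv₂, hd], hdw.symm⟩
    exact ⟨w₁, hself w₁, w₂, hself w₂, hac ⟨h₁, hv₁⟩ ⟨h₂, hv₂⟩ (Subtype.val_injective.ne hne)⟩

lemma exists_isTreeDecomp_induce_subset_bag [Finite V] {U D : Set V} {v : V} (hv : v ∈ S)
    (hac : G.IsClique (S \ {v})) (hSU : S ⊆ U) (hD : (G.induce D).Connected)
    (hDU : Disjoint D U) (hSD : S ⊆ nbhdSet G D) :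
    ∃ (ι : Type) (T : SimpleGraph ι) (bag : ι → Set U), IsTreeDecomp (G.induce U) T bag ∧
      (∀ i, (bag i).ncard ≤ tw G + 1) ∧ ∃ r, S ⊆ Subtype.val '' bag r := by
  obtain ⟨ι, T, bag, hd, hw⟩ := exists_isTreeDecomp_ncard_le_tw G
  obtain ⟨bag', hd', hw'⟩ := hd.of_isMinorOf (isMinorOf_completedOn hv hac hD hDU hSD)
  obtain ⟨r, hr⟩ := hd'.exists_subset_bag_of_isClique (K := Subtype.val ⁻¹' S) (Set.toFinite _)
    fun x hx y hy hxy => ⟨hxy, .inr ⟨hx, hy⟩⟩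
  exact ⟨ι, T, bag', hd'.mono (fun x y h => ⟨h.ne, .inl h⟩ : G.induce U ≤ completedOn G U S),
    fun i => (hw' i).trans (hw i), r, fun s hs => ⟨⟨s, hSU hs⟩, hr hs, rfl⟩⟩

end Separators

/-- Bodlaender–Koster: a minimal separator `S` that is an
almost-clique is safe: `G` has a tree-decomposition of width `tw G` inducing `S`
as the intersection of two adjacent bags. -/
theorem stmt16 {V : Type} [Finite V] (G : SimpleGraph V) (S : Set V)
    (hmin : IsMinSeparator G S) (v : V) (hv : v ∈ S) (hac : G.IsClique (S \ {v})) :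
    ∃ (ι : Type) (T : SimpleGraph ι) (bag : ι → Set V),
      IsTreeDecomp G T bag ∧ (∀ i, (bag i).ncard ≤ tw G + 1) ∧
      ∃ i j, T.Adj i j ∧ bag i ∩ bag j = S := by
  obtain ⟨C, D, hCD, hSC, hSD⟩ := hmin.exists_full_components
  have hCS : Disjoint (compSet G S C) S := Set.disjoint_left.mpr fun _ h => h.1
  have hDS : Disjoint (compSet G S D) S := Set.disjoint_left.mpr fun _ h => h.1
  obtain ⟨ι₁, T₁, bag₁, hd₁, hw₁, r₁, hr₁⟩ := exists_isTreeDecomp_induce_subset_bag hv hac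
    hCS.subset_compl_left (connected_induce_compSet C) disjoint_compl_right hSC
  obtain ⟨ι₂, T₂, bag₂, hd₂, hw₂, r₂, hr₂⟩ := exists_isTreeDecomp_induce_subset_bag hv hac
    Set.subset_union_right (connected_induce_compSet D)
    (Set.disjoint_union_right.mpr ⟨disjoint_compSet hCD.symm, hDS⟩) hSD
  have hinter : (compSet G S C)ᶜ ∩ (compSet G S C ∪ S) = S := by
    rw [Set.inter_union_distrib_left, Set.compl_inter_self, Set.empty_union,
      Set.inter_eq_right.mpr hCS.subset_compl_left]
  refine ⟨ι₁ ⊕ ι₂, _, _, hd₁.glue hd₂ (fun u => (em (u ∈ compSet G S C)).elim (.inr ∘ .inl) .inl)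
    (fun u w => adj_mem_compl_compSet_or_mem_union) (by rwa [hinter]) (by rwa [hinter]),
    ?_, .inl r₁, .inr r₂, by simp [edge], ?_⟩
  · rintro (i | j)
    · simpa [Set.ncard_image_of_injective _ Subtype.val_injective] using hw₁ i
    · simpa [Set.ncard_image_of_injective _ Subtype.val_injective] using hw₂ j
  · refine subset_antisymm ?_ fun s hs => ⟨hr₁ hs, hr₂ hs⟩
    rintro _ ⟨⟨x, -, rfl⟩, ⟨y, -, hyx⟩⟩
    exact hinter.subset ⟨x.2, hyx ▸ y.2⟩
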